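/- For all natural numbers m and N, ⟨e_N, a^m ∘ (a†)^m e_N⟩ = (N+1)·(N+2)···(N+m) (the rising factorial (N+m)!/N!). This word realizes the maximum value of ⟨e_N, a^λ e_N⟩ over balanced words λ of length 2m. -/
import Mathlib


open MeasureTheory Filter

noncomputable def e (n : ℕ) : ℕ →₀ ℝ := Finsupp.single n 1

noncomputable def innerF (f g : ℕ →₀ ℝ) : ℝ := f.sum fun n c => c * g n

noncomputable def ann : (ℕ →₀ ℝ) →ₗ[ℝ] (ℕ →₀ ℝ) :=
  Finsupp.lsum ℝ fun n => Real.sqrt n • (Finsupp.lsingle (n - 1) : ℝ →ₗ[ℝ] (ℕ →₀ ℝ))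

noncomputable def cre : (ℕ →₀ ℝ) →ₗ[ℝ] (ℕ →₀ ℝ) :=
  Finsupp.lsum ℝ fun n => Real.sqrt (n + 1) • (Finsupp.lsingle (n + 1) : ℝ →ₗ[ℝ] (ℕ →₀ ℝ))


noncomputable def wordOp {k : ℕ} (lam : Fin k → Bool) : (ℕ →₀ ℝ) →ₗ[ℝ] (ℕ →₀ ℝ) :=
  (List.ofFn fun i => if lam i then cre else ann).foldr (· ∘ₗ ·) LinearMap.id


lemma cre_e (k : ℕ) : cre (e k) = Real.sqrt (k+1) • e (k+1) := by
  simp [cre, e, Finsupp.lsum_single, Finsupp.smul_single]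

lemma ann_e (k : ℕ) : ann (e k) = Real.sqrt k • e (k-1) := by
  simp [ann, e, Finsupp.lsum_single, Finsupp.smul_single]

lemma innerF_e (N : ℕ) (v : ℕ →₀ ℝ) : innerF (e N) v = v N := by
  simp [innerF, e, Finsupp.sum_single_index]

noncomputable def opOf (b : Bool) : (ℕ →₀ ℝ) →ₗ[ℝ] (ℕ →₀ ℝ) := if b then cre else ann

def htL : List Bool → ℕ → ℕ
  | [], s => s
  | b :: l, s => if b then htL l s + 1 else htL l s - 1

noncomputable def coefL : List Bool → ℕ → ℝ
  | [], _ => 1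
  | b :: l, s =>
      (if b then Real.sqrt ((htL l s : ℝ) + 1) else Real.sqrt (htL l s)) * coefL l s

lemma foldr_apply (l : List Bool) (N : ℕ) :
    ((l.map opOf).foldr (· ∘ₗ ·) LinearMap.id) (e N) = coefL l N • e (htL l N) := by
  induction l with
  | nil => simp [coefL, htL]
  | cons b l ih =>
    have h0 : ((b::l).map opOf).foldr (· ∘ₗ ·) LinearMap.id
        = opOf b ∘ₗ (l.map opOf).foldr (· ∘ₗ ·) LinearMap.id := rfl
    rw [h0, LinearMap.comp_apply, ih, _root_.map_smul]
    cases b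
    · rw [show opOf false = ann from rfl, ann_e, smul_smul,
        show htL (false::l) N = htL l N - 1 from rfl,
        show coefL (false::l) N = Real.sqrt (htL l N) * coefL l N from rfl, mul_comm]
    · rw [show opOf true = cre from rfl, cre_e, smul_smul,
        show htL (true::l) N = htL l N + 1 from rfl,
        show coefL (true::l) N = Real.sqrt ((htL l N : ℝ) + 1) * coefL l N from rfl, mul_comm]

lemma wordOp_apply {k : ℕ} (lam : Fin k → Bool) (N : ℕ) :
    wordOp lam (e N) = coefL (List.ofFn lam) N • e (htL (List.ofFn lam) N) := by
  rw [← foldr_apply, wordOp, List.map_ofFn]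
  rfl

lemma coefL_nonneg (l : List Bool) (s : ℕ) : 0 ≤ coefL l s := by
  induction l with
  | nil => norm_num [coefL]
  | cons b l ih =>
    refine mul_nonneg ?_ ih
    cases b <;> simp [Real.sqrt_nonneg]

lemma htL_le (l : List Bool) (s : ℕ) : htL l s ≤ s + l.length := by
  induction l with
  | nil => simp [htL]
  | cons b l ih => cases b <;> simp [htL] <;> omega

lemma htL_append (l1 l2 : List Bool) (s : ℕ) : htL (l1 ++ l2) s = htL l1 (htL l2 s) := by
  induction l1 with
  | nil => simp [htL]
  | cons b l ih => cases b <;> simp [htL, ih]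

lemma coefL_append (l1 l2 : List Bool) (s : ℕ) :
    coefL (l1 ++ l2) s = coefL l1 (htL l2 s) * coefL l2 s := by
  induction l1 with
  | nil => simp [coefL]
  | cons b l ih => cases b <;> simp [coefL, htL_append, ih, mul_assoc]

lemma coefL_le_forward (l : List Bool) (s : ℕ) :
    coefL l s ≤ ∏ j ∈ Finset.range l.length, Real.sqrt ((s : ℝ) + 1 + j) := by
  induction l with
  | nil => simp [coefL]
  | cons b l ih =>
    have hlen : ((htL l s : ℝ)) ≤ (s : ℝ) + l.length := by exact_mod_cast htL_le l s
    have hfac : (if b then Real.sqrt ((htL l s : ℝ) + 1) else Real.sqrt (htL l s)) ≤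
        Real.sqrt ((s : ℝ) + 1 + l.length) := by
      cases b
      · show Real.sqrt ((htL l s : ℝ)) ≤ _
        exact Real.sqrt_le_sqrt (by linarith)
      · show Real.sqrt ((htL l s : ℝ) + 1) ≤ _
        exact Real.sqrt_le_sqrt (by linarith)
    calc coefL (b :: l) s
        ≤ Real.sqrt ((s : ℝ) + 1 + l.length) * ∏ j ∈ Finset.range l.length, Real.sqrt ((s : ℝ) + 1 + j) :=
          mul_le_mul hfac ih (coefL_nonneg l s) (Real.sqrt_nonneg _)
      _ = ∏ j ∈ Finset.range (l.length + 1), Real.sqrt ((s : ℝ) + 1 + j) := by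
          rw [Finset.prod_range_succ]; ring
      _ = ∏ j ∈ Finset.range (b :: l).length, Real.sqrt ((s : ℝ) + 1 + j) := by simp

lemma coefL_le_backward (l : List Bool) (s : ℕ) :
    coefL l s ≤ ∏ j ∈ Finset.range l.length, Real.sqrt ((htL l s : ℝ) + 1 + j) := by
  induction l with
  | nil => simp [coefL]
  | cons b l ih =>
    cases b
    · -- false
      rcases Nat.eq_zero_or_pos (htL l s) with h0 | hpos
      · have hz : coefL (false :: l) s = 0 := by
          simp [coefL, h0]
        rw [hz]
        exact Finset.prod_nonneg fun _ _ => Real.sqrt_nonneg _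
      · obtain ⟨h', hh'⟩ : ∃ h', htL l s = h' + 1 := ⟨htL l s - 1, by omega⟩
        rw [hh'] at ih
        have hht : htL (false :: l) s = h' := by simp [htL, hh']
        have hcf : coefL (false :: l) s = Real.sqrt ((h' : ℝ) + 1) * coefL l s := by
          have h2 : coefL (false :: l) s = Real.sqrt ((htL l s : ℝ)) * coefL l s := rfl
          rw [h2, hh']; push_cast; ring_nf
        rw [hht, hcf]
        calc Real.sqrt ((h' : ℝ) + 1) * coefL l s
            ≤ Real.sqrt ((h' : ℝ) + 1) *
              ∏ j ∈ Finset.range l.length, Real.sqrt (((h' : ℝ) + 1) + 1 + j) := by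
              refine mul_le_mul_of_nonneg_left ?_ (Real.sqrt_nonneg _)
              calc coefL l s ≤ ∏ j ∈ Finset.range l.length, Real.sqrt (((h' + 1 : ℕ) : ℝ) + 1 + j) := ih
                _ = ∏ j ∈ Finset.range l.length, Real.sqrt (((h' : ℝ) + 1) + 1 + j) := by
                    refine Finset.prod_congr rfl fun j _ => ?_
                    push_cast; ring_nf
          _ = ∏ j ∈ Finset.range (l.length + 1), Real.sqrt ((h' : ℝ) + 1 + j) := by
              rw [Finset.prod_range_succ']
              rw [mul_comm]
              congr 1
              · refine Finset.prod_congr rfl fun j _ => ?_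
                push_cast; ring_nf
              · norm_num
          _ = ∏ j ∈ Finset.range (false :: l).length, Real.sqrt ((h' : ℝ) + 1 + j) := by simp
    · -- true
      have hht : htL (true :: l) s = htL l s + 1 := rfl
      have hn : (0:ℝ) ≤ (l.length : ℝ) := Nat.cast_nonneg _
      have step : Real.sqrt ((htL l s : ℝ) + 1) *
            ∏ j ∈ Finset.range l.length, Real.sqrt ((htL l s : ℝ) + 1 + j)
          ≤ Real.sqrt (((htL l s : ℝ) + 1) + 1 + l.length) *
            ∏ j ∈ Finset.range l.length, Real.sqrt (((htL l s : ℝ) + 1) + 1 + j) := by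
        refine mul_le_mul (Real.sqrt_le_sqrt (by linarith)) ?_
          (Finset.prod_nonneg fun _ _ => Real.sqrt_nonneg _) (Real.sqrt_nonneg _)
        exact Finset.prod_le_prod (fun _ _ => Real.sqrt_nonneg _)
          (fun j _ => Real.sqrt_le_sqrt (by linarith))
      calc coefL (true :: l) s
          = Real.sqrt ((htL l s : ℝ) + 1) * coefL l s := rfl
        _ ≤ Real.sqrt ((htL l s : ℝ) + 1) *
            ∏ j ∈ Finset.range l.length, Real.sqrt ((htL l s : ℝ) + 1 + j) :=
            mul_le_mul_of_nonneg_left ih (Real.sqrt_nonneg _)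
        _ ≤ Real.sqrt (((htL l s : ℝ) + 1) + 1 + l.length) *
            ∏ j ∈ Finset.range l.length, Real.sqrt (((htL l s : ℝ) + 1) + 1 + j) := step
        _ = ∏ j ∈ Finset.range (l.length + 1), Real.sqrt (((htL l s : ℝ) + 1) + 1 + j) := by
            rw [Finset.prod_range_succ]; ring
        _ = ∏ j ∈ Finset.range (true :: l).length,
              Real.sqrt ((htL (true :: l) s : ℝ) + 1 + j) := by
            rw [hht]
            refine Finset.prod_congr (by simp) fun j _ => ?_
            push_cast; ring_nf

lemma crePow_e (m N : ℕ) :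
    (cre ^ m) (e N) = (∏ i ∈ Finset.range m, Real.sqrt ((N : ℝ) + 1 + i)) • e (N + m) := by
  induction m generalizing N with
  | zero => simp
  | succ m ih =>
    rw [pow_succ, Module.End.mul_apply, cre_e, _root_.map_smul, ih]
    rw [smul_smul, Finset.prod_range_succ']
    congr 1
    · rw [mul_comm]
      congr 1
      · refine Finset.prod_congr rfl fun j _ => ?_
        push_cast; ring_nf
      · norm_num
    · congr 1
      omega

lemma annPow_e (m N : ℕ) :
    (ann ^ m) (e (N + m)) = (∏ i ∈ Finset.range m, Real.sqrt ((N : ℝ) + 1 + i)) • e N := by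
  induction m with
  | zero => simp
  | succ m ih =>
    rw [pow_succ, Module.End.mul_apply]
    have h1 : e (N + (m + 1)) = e ((N + m) + 1) := by congr 1
    rw [h1, ann_e]
    simp only [Nat.add_sub_cancel, _root_.map_smul, ih, smul_smul, Finset.prod_range_succ]
    congr 1
    rw [mul_comm]
    congr 1
    push_cast; ring_nf

lemma part1 (m N : ℕ) :
    innerF (e N) (((ann ^ m) ∘ₗ (cre ^ m)) (e N)) = ∏ i ∈ Finset.range m, ((N : ℝ) + 1 + i) := by
  rw [LinearMap.comp_apply, crePow_e, _root_.map_smul, annPow_e, smul_smul, innerF_e]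
  rw [e, Finsupp.smul_apply, Finsupp.single_apply, if_pos rfl]
  rw [← Finset.prod_mul_distrib]
  simp only [smul_eq_mul, mul_one]
  exact Finset.prod_congr rfl fun i _ => Real.mul_self_sqrt (by positivity)


/-- For every `N`, `⟨e_N, a^m (a†)^m e_N⟩` equals the rising factorial
`(N+1)·(N+2)⋯(N+m)`, and this is the maximum of `⟨e_N, a^λ e_N⟩` over balanced
words `λ` of length `2m`. -/
theorem annPow_crePow_matrix_element (m N : ℕ) :
    innerF (e N) (((ann ^ m) ∘ₗ (cre ^ m)) (e N)) = ∏ i ∈ Finset.range m, ((N : ℝ) + 1 + i) ∧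
    ∀ lam : Fin (2 * m) → Bool,
      (Finset.univ.filter fun i => lam i = true).card = m →
      (Finset.univ.filter fun i => lam i = false).card = m →
      innerF (e N) (wordOp lam (e N)) ≤ innerF (e N) (((ann ^ m) ∘ₗ (cre ^ m) : (ℕ →₀ ℝ) →ₗ[ℝ] ℕ →₀ ℝ) (e N)) := by
  refine ⟨part1 m N, fun lam _ _ => ?_⟩
  rw [part1 m N]
  have hP : (0:ℝ) ≤ ∏ i ∈ Finset.range m, ((N : ℝ) + 1 + i) :=
    Finset.prod_nonneg fun i _ => by positivity
  set l := List.ofFn lam with hl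
  have hlen : l.length = 2 * m := by simp [hl]
  rw [wordOp_apply, ← hl, innerF_e, Finsupp.smul_apply, e, Finsupp.single_apply]
  by_cases hht : htL l N = N
  · rw [if_pos hht]
    simp only [smul_eq_mul, mul_one]
    -- split the word in the middle
    have hsplit : l = l.take m ++ l.drop m := (List.take_append_drop m l).symm
    have hlen1 : (l.take m).length = m := by
      rw [List.length_take, hlen]; omega
    have hlen2 : (l.drop m).length = m := by
      rw [List.length_drop, hlen]; omega
    have hco : coefL l N = coefL (l.take m) (htL (l.drop m) N) * coefL (l.drop m) N := by
      conv_lhs => rw [hsplit]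
      exact coefL_append _ _ N
    have hhtmid : htL (l.take m) (htL (l.drop m) N) = N := by
      rw [← htL_append, ← hsplit, hht]
    have b1 : coefL (l.take m) (htL (l.drop m) N) ≤
        ∏ j ∈ Finset.range m, Real.sqrt ((N : ℝ) + 1 + j) := by
      have := coefL_le_backward (l.take m) (htL (l.drop m) N)
      rwa [hhtmid, hlen1] at this
    have b2 : coefL (l.drop m) N ≤ ∏ j ∈ Finset.range m, Real.sqrt ((N : ℝ) + 1 + j) := by
      have := coefL_le_forward (l.drop m) N
      rwa [hlen2] at this
    calc coefL l N ≤ (∏ j ∈ Finset.range m, Real.sqrt ((N : ℝ) + 1 + j)) *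
          ∏ j ∈ Finset.range m, Real.sqrt ((N : ℝ) + 1 + j) := by
          rw [hco]
          exact mul_le_mul b1 b2 (coefL_nonneg _ _)
            (Finset.prod_nonneg fun _ _ => Real.sqrt_nonneg _)
      _ = ∏ i ∈ Finset.range m, ((N : ℝ) + 1 + i) := by
          rw [← Finset.prod_mul_distrib]
          exact Finset.prod_congr rfl fun i _ => Real.mul_self_sqrt (by positivity)
  · rw [if_neg hht]
    simpa using hP
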